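/- For every b ∈ ℝ and x ∈ ℝ, almost surely under P_x: for every t > 0 at which X does not jump downward, R^{b,η_n}_t increases to R^{b,∞}_t = (b − X̲_t)^+ as n → ∞; consequently U^{b,η_n}_t := X_t + R^{b,η_n}_t increases to U^{b,∞}_t := X_t + R^{b,∞}_t for Lebesgue-a.e. t > 0. -/

import Mathlib

open MeasureTheory ProbabilityTheory Filter Set Real Topology
open scoped ENNReal

noncomputable section

namespace PoissonControl

variable {Ω : Type*} [MeasurableSpace Ω]

/-- The right-hand derivative `f'_+`. -/
def rd (f : ℝ → ℝ) (x : ℝ) : ℝ := derivWithin f (Ioi x) x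

/-- `X` is a driftless compound Poisson process under `P`: its characteristic function is
`exp(-t ∫ (1 - e^{iλz}) Π(dz))` for some finite Lévy measure `Π` with no mass at `0`. -/
def IsDriftlessCompoundPoisson (P : Measure Ω) (X : ℝ → Ω → ℝ) : Prop :=
  ∃ Pi : Measure ℝ, IsFiniteMeasure Pi ∧ Pi {0} = 0 ∧
    ∀ t : ℝ, 0 ≤ t → ∀ l : ℝ,
      ∫ ω, Complex.exp (Complex.I * (l : ℂ) * (X t ω : ℂ)) ∂P
        = Complex.exp (-(t : ℂ) *
            ∫ z : ℝ, (1 - Complex.exp (Complex.I * (l : ℂ) * (z : ℂ))) ∂Pi)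

/-- `N` is a Poisson counting process with rate `r` under `P`: it starts at `0`, has
nondecreasing right-continuous paths, stationary Poisson-distributed increments and
independent increments. -/
structure IsPoissonProcess (P : Measure Ω) (N : ℝ → Ω → ℕ) (r : ℝ) : Prop where
  rate_pos : 0 < r
  meas : ∀ t, Measurable (N t)
  zero : ∀ᵐ ω ∂P, N 0 ω = 0
  mono : ∀ᵐ ω ∂P, ∀ s t : ℝ, 0 ≤ s → s ≤ t → N s ω ≤ N t ω
  right_cont : ∀ᵐ ω ∂P, ∀ t : ℝ, 0 ≤ t →
      Tendsto (fun s => N s ω) (𝓝[>] t) (𝓝 (N t ω))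
  pois_incr : ∀ s t : ℝ, 0 ≤ s → s ≤ t → ∀ k : ℕ,
      P {ω | N t ω - N s ω = k}
        = ENNReal.ofReal (Real.exp (-(r * (t - s))) * (r * (t - s)) ^ k / Nat.factorial k)
  indep_incr : ∀ (n : ℕ) (t : ℕ → ℝ), (∀ i, 0 ≤ t i) → Monotone t →
      iIndepFun
        (fun (i : Fin n) ω => N (t (i + 1)) ω - N (t i) ω) P

/-- The setting of the stochastic control problem: a Lévy process `X` (with `X_0 = 0`,
càdlàg paths, stationary independent increments, not a driftless compound Poisson process,
with a finite exponential moment), a discount rate `q > 0`, a unit controlling cost `C`,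
and a convex running cost `f` of polynomial growth with `f'_+(-∞) < -Cq < f'_+(∞)`. -/
structure Setting (Ω : Type*) [MeasurableSpace Ω] where
  P : Measure Ω
  prob : IsProbabilityMeasure P
  X : ℝ → Ω → ℝ
  meas_X : ∀ t, Measurable (X t)
  X_zero : ∀ᵐ ω ∂P, X 0 ω = 0
  cadlag : ∀ᵐ ω ∂P, ∀ t : ℝ, 0 ≤ t →
      Tendsto (fun s => X s ω) (𝓝[>] t) (𝓝 (X t ω)) ∧
      (0 < t → ∃ l : ℝ, Tendsto (fun s => X s ω) (𝓝[<] t) (𝓝 l))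
  stat_incr : ∀ s t : ℝ, 0 ≤ s → s ≤ t →
      Measure.map (fun ω => X t ω - X s ω) P = Measure.map (X (t - s)) P
  indep_incr : ∀ (n : ℕ) (t : ℕ → ℝ), (∀ i, 0 ≤ t i) → Monotone t →
      iIndepFun
        (fun (i : Fin n) ω => X (t (i + 1)) ω - X (t i) ω) P
  not_cpp : ¬ IsDriftlessCompoundPoisson P X
  exp_moment : ∃ θ : ℝ, 0 < θ ∧ Integrable (fun ω => Real.exp (θ * |X 1 ω|)) P
  q : ℝ
  q_pos : 0 < q
  Ccost : ℝ
  f : ℝ → ℝ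
  f_convex : ConvexOn ℝ univ f
  f_growth : ∃ k₁ k₂ : ℝ, ∃ Ngr : ℕ, 0 < k₁ ∧ 0 < k₂ ∧
      ∀ x : ℝ, |f x| ≤ k₁ + k₂ * |x| ^ Ngr
  slope_below : ∃ x₀ : ℝ, rd f x₀ < -Ccost * q
  slope_above : ∃ x₁ : ℝ, -Ccost * q < rd f x₁

/-- Poissonian observation of the Lévy process: a Poisson process `Nproc` of rate `η`,
independent of `X`. -/
structure Obs {Ω : Type*} [MeasurableSpace Ω] (S : Setting Ω) where
  η : ℝ
  Nproc : ℝ → Ω → ℕ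
  pp : IsPoissonProcess S.P Nproc η
  indep_X : IndepFun (fun ω => fun t : ℝ => S.X t ω) (fun ω => fun t : ℝ => Nproc t ω) S.P

variable {S : Setting Ω}

/-- `k`-th arrival time `T(k)` of the observation process (`T(0) = 0`). -/
def Obs.arrival (O : Obs S) (k : ℕ) (ω : Ω) : ℝ :=
  sInf {t : ℝ | 0 ≤ t ∧ k ≤ O.Nproc t ω}

/-- Control process `R^b_t = max_{1 ≤ k ≤ N_t} (b - X_{T(k)})⁺` of the periodic barrier
strategy at level `b`, for the process started at `x` (so that `X` under `P_x` is `x + X`). -/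
def Obs.barR (O : Obs S) (x b t : ℝ) (ω : Ω) : ℝ :=
  ⨆ k ∈ Finset.Icc 1 (O.Nproc t ω), max (b - (x + S.X (O.arrival k ω) ω)) 0

/-- Controlled process `U^b = X + R^b` under `P_x`. -/
def Obs.barU (O : Obs S) (x b t : ℝ) (ω : Ω) : ℝ := x + S.X t ω + O.barR x b t ω

/-- First control time `T_b` of the periodic barrier strategy: the first Poisson arrival time
at which the process (started at `x`) is observed strictly below `b`; `∞` if there is none. -/
def Obs.firstControl (O : Obs S) (x b : ℝ) (ω : Ω) : ℝ≥0∞ :=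
  sInf {s : ℝ≥0∞ | ∃ k : ℕ, 1 ≤ k ∧ s = ENNReal.ofReal (O.arrival k ω) ∧
      x + S.X (O.arrival k ω) ω < b}

/-- Discount factor `e^{-q s}` of a possibly infinite time. -/
def edisc (q : ℝ) (s : ℝ≥0∞) : ℝ := if s = ⊤ then 0 else Real.exp (-q * s.toReal)

/-- Expected cost `v_b(x)` of the periodic barrier strategy at level `b`, started at `x`.
The controlling cost `∫_{[0,∞)} e^{-qt} dR^b_t` is expressed, via integration by parts
(using `R^b_0 = 0` and monotonicity of `R^b`), as `q ∫_0^∞ e^{-qt} R^b_t dt`. -/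
def Obs.vbar (O : Obs S) (b x : ℝ) : ℝ :=
  ∫ ω, ((∫ t in Ioi (0:ℝ), Real.exp (-S.q * t) * S.f (O.barU x b t ω)) +
    S.Ccost * (S.q * ∫ t in Ioi (0:ℝ), Real.exp (-S.q * t) * O.barR x b t ω)) ∂S.P

/-- `ρ(b) = E_b[∫_0^∞ e^{-qt} f'_+(U^b_t) dt]`. -/
def Obs.rho (O : Obs S) (b : ℝ) : ℝ :=
  ∫ ω, (∫ t in Ioi (0:ℝ), Real.exp (-S.q * t) * rd S.f (O.barU b b t ω)) ∂S.P

/-- The candidate optimal barrier `b* = inf{b : ρ(b) + C ≥ 0}`. -/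
def Obs.bstar (O : Obs S) : ℝ := sInf {b : ℝ | 0 ≤ O.rho b + S.Ccost}

/-- Natural filtration of `(X, N^η)`. -/
def Obs.natFilt (O : Obs S) (t : ℝ) : MeasurableSpace Ω :=
  ⨆ s ∈ Icc (0:ℝ) t,
    (MeasurableSpace.comap (S.X s) inferInstance ⊔
      MeasurableSpace.comap (O.Nproc s) inferInstance)

/-- A strategy: a nonnegative càglàd process `ν`, adapted to the natural filtration of
`(X, N^η)`; the corresponding control is `R^pol_t = ∫_{[0,t]} ν_s dN^η_s`. -/
structure Strategy {Ω : Type*} [MeasurableSpace Ω] {S : Setting Ω} (O : Obs S) where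
  ν : ℝ → Ω → ℝ
  nonneg : ∀ t ω, 0 ≤ ν t ω
  caglad : ∀ᵐ ω ∂S.P, ∀ t : ℝ, 0 < t →
      Tendsto (fun s => ν s ω) (𝓝[<] t) (𝓝 (ν t ω)) ∧
      ∃ l : ℝ, Tendsto (fun s => ν s ω) (𝓝[>] t) (𝓝 l)
  adapted : ∀ t : ℝ, 0 ≤ t → Measurable[O.natFilt t] (ν t)

/-- Control process `R^pol_t = ∫_{[0,t]} ν_s dN^η_s = Σ_{k=1}^{N_t} ν_{T(k)}`. -/
def Obs.stratR (O : Obs S) (pol : Strategy O) (t : ℝ) (ω : Ω) : ℝ :=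
  ∑ k ∈ Finset.Icc 1 (O.Nproc t ω), pol.ν (O.arrival k ω) ω

/-- Controlled process `U^pol = X + R^pol` under `P_x`. -/
def Obs.stratU (O : Obs S) (pol : Strategy O) (x t : ℝ) (ω : Ω) : ℝ :=
  x + S.X t ω + O.stratR pol t ω

/-- Admissibility: `E_x[∫_0^∞ e^{-qt}|f(U^pol_t)| dt + ∫_0^∞ e^{-qt} dR^pol_t] < ∞`, the second
integral being expressed via integration by parts as `q ∫_0^∞ e^{-qt} R^pol_t dt`. -/
def Obs.Admissible (O : Obs S) (pol : Strategy O) (x : ℝ) : Prop :=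
  (∫⁻ ω, (∫⁻ t in Ioi (0:ℝ),
      ENNReal.ofReal (Real.exp (-S.q * t) * |S.f (O.stratU pol x t ω)|)) ∂S.P) < ⊤ ∧
  (∫⁻ ω, (∫⁻ t in Ioi (0:ℝ),
      ENNReal.ofReal (S.q * Real.exp (-S.q * t) * O.stratR pol t ω)) ∂S.P) < ⊤

/-- Expected cost `v_pol(x)` of a strategy `pol` started at `x`. -/
def Obs.vpi (O : Obs S) (pol : Strategy O) (x : ℝ) : ℝ :=
  ∫ ω, ((∫ t in Ioi (0:ℝ), Real.exp (-S.q * t) * S.f (O.stratU pol x t ω)) +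
    S.Ccost * (S.q * ∫ t in Ioi (0:ℝ), Real.exp (-S.q * t) * O.stratR pol t ω)) ∂S.P

/-- Optimal value function `v(x) = inf_{pol ∈ 𝒜} v_pol(x)`. -/
def Obs.vOpt (O : Obs S) (x : ℝ) : ℝ :=
  sInf {y : ℝ | ∃ pol : Strategy O, O.Admissible pol x ∧ y = O.vpi pol x}

/-- The operator `ℳ g(x) = inf_{l ≥ 0} { C l + g(x + l) }`. -/
def genM (C : ℝ) (g : ℝ → ℝ) (x : ℝ) : ℝ :=
  sInf {y : ℝ | ∃ l : ℝ, 0 ≤ l ∧ y = C * l + g (x + l)}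

/-- The generator `ℒ` associated with the Lévy triplet `(γ, σ, Π)`. -/
def genL (γ σ : ℝ) (Pi : Measure ℝ) (w : ℝ → ℝ) (x : ℝ) : ℝ :=
  γ * deriv w x + σ ^ 2 / 2 * deriv (deriv w) x +
    ∫ z : ℝ, (w (x + z) - w x - (if |z| < 1 then deriv w x * z else 0)) ∂Pi

/-- `X` has paths of bounded variation (on compact time intervals), a.s. -/
def HasBVPaths (S : Setting Ω) : Prop :=
  ∀ᵐ ω ∂S.P, ∀ T : ℝ, 0 < T → BoundedVariationOn (fun t => S.X t ω) (Icc 0 T)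

/-- `(γ, σ, Π)` is the Lévy–Khintchine triplet of `X`:
`E[e^{iλ X_t}] = e^{-t Ψ(λ)}` with
`Ψ(λ) = -iγλ + σ²λ²/2 + ∫ (1 - e^{iλz} + iλz 1_{|z|<1}) Π(dz)`. -/
def IsTriplet (S : Setting Ω) (γ σ : ℝ) (Pi : Measure ℝ) : Prop :=
  0 ≤ σ ∧ Pi {0} = 0 ∧ (∫⁻ z : ℝ, ENNReal.ofReal (min 1 (z ^ 2)) ∂Pi) < ⊤ ∧
  ∀ t : ℝ, 0 ≤ t → ∀ l : ℝ,
    ∫ ω, Complex.exp (Complex.I * (l : ℂ) * (S.X t ω : ℂ)) ∂S.P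
      = Complex.exp (-(t : ℂ) *
          (-(Complex.I * (γ : ℂ) * (l : ℂ)) + (σ : ℂ) ^ 2 * (l : ℂ) ^ 2 / 2 +
            ∫ z : ℝ, (1 - Complex.exp (Complex.I * (l : ℂ) * (z : ℂ)) +
              (if |z| < 1 then Complex.I * (l : ℂ) * (z : ℂ) else 0)) ∂Pi))

/-- Running infimum `X̲_t = inf_{0 ≤ s ≤ t} X_s`. -/
def Setting.runInf (S : Setting Ω) (t : ℝ) (ω : Ω) : ℝ :=
  sInf ((fun s => S.X s ω) '' Icc 0 t)

/-- Classical (continuous-observation) barrier control `R^{b,∞}_t = (b - X̲_t)⁺` under `P_x`. -/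
def Setting.classR (S : Setting Ω) (x b t : ℝ) (ω : Ω) : ℝ :=
  max (b - (x + S.runInf t ω)) 0

/-- Classical reflected (controlled) process `U^{b,∞} = X + R^{b,∞}` under `P_x`. -/
def Setting.classU (S : Setting Ω) (x b t : ℝ) (ω : Ω) : ℝ :=
  x + S.X t ω + S.classR x b t ω

/-- `ρ_∞(b) = E_b[∫_0^∞ e^{-qt} f'_+(U^{b,∞}_t) dt]`. -/
def Setting.rhoInf (S : Setting Ω) (b : ℝ) : ℝ :=
  ∫ ω, (∫ t in Ioi (0:ℝ), Real.exp (-S.q * t) * rd S.f (S.classU b b t ω)) ∂S.P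

/-- Classical optimal barrier `b*_∞ = inf{b : ρ_∞(b) + C ≥ 0}`. -/
def Setting.bstarInf (S : Setting Ω) : ℝ := sInf {b : ℝ | 0 ≤ S.rhoInf b + S.Ccost}

/-- Classical optimal value `v*_∞(x)`, the controlling cost again written via
integration by parts. -/
def Setting.vInf (S : Setting Ω) (x : ℝ) : ℝ :=
  ∫ ω, ((∫ t in Ioi (0:ℝ), Real.exp (-S.q * t) * S.f (S.classU x S.bstarInf t ω)) +
    S.Ccost * (S.q * ∫ t in Ioi (0:ℝ), Real.exp (-S.q * t) * S.classR x S.bstarInf t ω)) ∂S.P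

/-- `X` is the negative of a subordinator: it has nonincreasing paths a.s. -/
def IsNegSubordinator (S : Setting Ω) : Prop :=
  ∀ᵐ ω ∂S.P, ∀ s t : ℝ, 0 ≤ s → s ≤ t → S.X t ω ≤ S.X s ω

/-- `g` is strictly increasing at the point `b`. -/
def StrictIncrAt (g : ℝ → ℝ) (b : ℝ) : Prop :=
  (∀ y : ℝ, y < b → g y < g b) ∧ (∀ y : ℝ, b < y → g b < g y)

/-- Superposed observation process `N^{η_n} = Σ_{k=1}^n M^k`. -/
def supN (M : ℕ → ℝ → Ω → ℕ) (n : ℕ) (t : ℝ) (ω : Ω) : ℕ :=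
  ∑ k ∈ Finset.Icc 1 n, M k t ω

/-- `k`-th arrival time of the superposed observation process `N^{η_n}`. -/
def supArr (M : ℕ → ℝ → Ω → ℕ) (n k : ℕ) (ω : Ω) : ℝ :=
  sInf {t : ℝ | 0 ≤ t ∧ k ≤ supN M n t ω}

/-- Periodic barrier control process `R^{b,η_n}` at level `b`, started at `x`, driven by the
observation times of `N^{η_n}`. -/
def supR (S : Setting Ω) (M : ℕ → ℝ → Ω → ℕ) (x b : ℝ) (n : ℕ) (t : ℝ) (ω : Ω) : ℝ :=
  ⨆ k ∈ Finset.Icc 1 (supN M n t ω), max (b - (x + S.X (supArr M n k ω) ω)) 0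

/-!
Superposition makes every observation time of `N^{η_n}` an observation time of `N^{η_{n+1}}`,
so `R^{b,η_n}_t` increases in `n`; it never exceeds `(b - X̲_t)⁺` because all observations up to
`t` lie in `[0, t]`. Since `N^{η_n}` has no arrival in `(p, q)` with probability
`e^{-η_n (q - p)} → 0`, almost surely every rational interval eventually contains an observation.
When `X` does not jump down at `t`, right-continuity (and the left limit at `t`, if the infimum
is only approached there) yields a rational interval in `[0, t]` on which `X` stays within `ε` of
`X̲_t`, so `R^{b,η_n}_t` is eventually within `ε` of `(b - X̲_t)⁺`. A càdlàg path has countably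
many jumps, which gives the statement for Lebesgue-a.e. `t`.
-/
structure IsCadlag (f : ℝ → ℝ) : Prop where
  right_cont : ∀ s, 0 ≤ s → Tendsto f (𝓝[>] s) (𝓝 (f s))
  left_lim : ∀ s, 0 < s → ∃ l, Tendsto f (𝓝[<] s) (𝓝 l)

def downJumps (f : ℝ → ℝ) (ε : ℝ) : Set ℝ := {t | 0 < t ∧ f t + ε < Function.leftLim f t}

namespace IsCadlag

variable {f : ℝ → ℝ}

theorem isBoundedUnder_ge_nhdsWithin_Icc (hf : IsCadlag f) {s t : ℝ} (hs : s ∈ Icc 0 t) :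
    (𝓝[Icc 0 t] s).IsBoundedUnder (· ≥ ·) f := by
  have hright : Tendsto f (𝓝[≥] s) (𝓝 (f s)) :=
    continuousWithinAt_Ioi_iff_Ici.1 (hf.right_cont s hs.1)
  rcases hs.1.eq_or_lt with rfl | hpos
  · exact hright.isBoundedUnder_ge.mono (nhdsWithin_mono _ Icc_subset_Ici_self)
  · obtain ⟨l, hleft⟩ := hf.left_lim s hpos
    refine IsBoundedUnder.mono nhdsWithin_le_nhds ?_
    rw [← nhdsLT_sup_nhdsGE, IsBoundedUnder, map_sup]
    exact isBounded_sup hleft.isBoundedUnder_ge hright.isBoundedUnder_ge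

theorem bddBelow_image_Icc (hf : IsCadlag f) (t : ℝ) : BddBelow (f '' Icc 0 t) := by
  refine isCompact_Icc.induction_on (p := fun U => BddBelow (f '' U)) (by simp)
    (fun U V hUV hV => hV.mono (image_mono hUV))
    (fun U V hU hV => by simpa only [image_union] using hU.union hV) fun s hs => ?_
  obtain ⟨B, hB⟩ := hf.isBoundedUnder_ge_nhdsWithin_Icc hs
  exact ⟨_, hB, B, by rintro _ ⟨u, hu, rfl⟩; exact hu⟩

theorem abs_leftLim_sub_le (hf : IsCadlag f) {u c r : ℝ} (hu : 0 < u)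
    (h : ∀ᶠ v in 𝓝 u, |f v - c| < r) : |Function.leftLim f u - c| ≤ r := by
  obtain ⟨l, hl⟩ := hf.left_lim u hu
  rw [leftLim_eq_of_tendsto hl]
  exact le_of_tendsto (hl.sub_const c).abs
    ((h.filter_mono nhdsWithin_le_nhds).mono fun _ => le_of_lt)

theorem notMem_downJumps_of_eventually (hf : IsCadlag f) {u c ε : ℝ}
    (h : ∀ᶠ v in 𝓝 u, |f v - c| < ε / 2) : u ∉ downJumps f ε := by
  rintro ⟨hu, hjump⟩
  have hleft := abs_le.1 (hf.abs_leftLim_sub_le hu h)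
  have hu := abs_lt.1 h.self_of_nhds
  linarith [hleft.2, hu.1]

theorem eventually_notMem_downJumps (hf : IsCadlag f) {s : Set ℝ} (hs : IsOpen s) {y c ε : ℝ}
    (hε : 0 < ε) (h : Tendsto f (𝓝[s] y) (𝓝 c)) :
    ∀ᶠ u in 𝓝[s] y, u ∉ downJumps f ε := by
  have hnear : ∀ᶠ v in 𝓝[s] y, |f v - c| < ε / 2 :=
    (h.sub_const c).abs (eventually_lt_nhds (by simpa using half_pos hε))
  filter_upwards [eventually_eventually_nhdsWithin.2 hnear, self_mem_nhdsWithin] with u hu hus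
  exact hf.notMem_downJumps_of_eventually (by rwa [nhdsWithin_eq_nhds.2 (hs.mem_nhds hus)] at hu)

theorem countable_downJumps_of_pos (hf : IsCadlag f) {ε : ℝ} (hε : 0 < ε) :
    (downJumps f ε).Countable := by
  refine (HereditarilyLindelofSpace.isLindelof _).countable (discreteTopology_subtype_iff.2 ?_)
  rintro y ⟨hy, -⟩
  obtain ⟨l, hl⟩ := hf.left_lim y hy
  rw [inf_principal_eq_bot, ← nhdsLT_sup_nhdsGT]
  exact eventually_sup.2 ⟨hf.eventually_notMem_downJumps isOpen_Iio hε hl,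
    hf.eventually_notMem_downJumps isOpen_Ioi hε (hf.right_cont y hy.le)⟩

theorem countable_downJumps (hf : IsCadlag f) : (downJumps f 0).Countable := by
  refine (countable_iUnion fun m : ℕ =>
    hf.countable_downJumps_of_pos (ε := 1 / (m + 1)) (by positivity)).mono ?_
  rintro t ⟨ht, hjump⟩
  obtain ⟨m, hm⟩ := exists_nat_one_div_lt (sub_pos.2 hjump)
  exact mem_iUnion.2 ⟨m, ht, by linarith⟩

theorem exists_Ico_lt_sInf_add (hf : IsCadlag f) {t ε : ℝ} (ht : 0 < t)
    (hjump : Function.leftLim f t ≤ f t) (hε : 0 < ε) :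
    ∃ s ∈ Ico 0 t, f s < sInf (f '' Icc 0 t) + ε := by
  obtain ⟨_, ⟨s, hs, rfl⟩, hfs⟩ := exists_lt_of_csInf_lt
    ((nonempty_Icc.2 ht.le).image f) (lt_add_of_pos_right _ (half_pos hε))
  rcases hs.2.lt_or_eq with hst | rfl
  · exact ⟨s, ⟨hs.1, hst⟩, by linarith⟩
  obtain ⟨l, hl⟩ := hf.left_lim s ht
  rw [leftLim_eq_of_tendsto hl] at hjump
  have hnear : ∀ᶠ u in 𝓝[<] s, f u < l + ε / 2 :=
    hl.eventually (eventually_lt_nhds (lt_add_of_pos_right l (half_pos hε)))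
  obtain ⟨u, hfu, hu⟩ := (hnear.and (Ioo_mem_nhdsLT ht)).exists
  exact ⟨u, ⟨hu.1.le, hu.2⟩, by linarith⟩

theorem exists_rat_Icc_lt_sInf_add (hf : IsCadlag f) {t ε : ℝ} (ht : 0 < t)
    (hjump : Function.leftLim f t ≤ f t) (hε : 0 < ε) :
    ∃ p q : ℚ, 0 ≤ (p : ℝ) ∧ p < q ∧ (q : ℝ) ≤ t ∧
      ∀ u ∈ Icc (p : ℝ) q, f u < sInf (f '' Icc 0 t) + ε := by
  obtain ⟨s, hs, hfs⟩ := hf.exists_Ico_lt_sInf_add ht hjump hε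
  obtain ⟨w, hsw, hw⟩ := mem_nhdsGT_iff_exists_Ioo_subset.1
    (((hf.right_cont s hs.1).eventually (eventually_lt_nhds hfs)).and (Ioo_mem_nhdsGT hs.2))
  obtain ⟨p, hsp, hpw⟩ := exists_rat_btwn (mem_Ioi.1 hsw)
  obtain ⟨q, hpq, hqw⟩ := exists_rat_btwn hpw
  have hsub : Icc (p : ℝ) q ⊆ Ioo s w := Icc_subset_Ioo hsp hqw
  refine ⟨p, q, hs.1.trans hsp.le, by exact_mod_cast hpq, (hw (hsub ⟨hpq.le, le_rfl⟩)).2.2.le,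
    fun u hu => (hw (hsub hu)).1⟩

end IsCadlag

structure IsCountingPath (N : ℝ → ℕ) : Prop where
  mono : MonotoneOn N (Ici 0)
  right_cont : ∀ s, 0 ≤ s → Tendsto N (𝓝[>] s) (𝓝 (N s))

def arrivalTime (N : ℝ → ℕ) (k : ℕ) : ℝ := sInf {t | 0 ≤ t ∧ k ≤ N t}

section arrivalTime

variable {N : ℝ → ℕ} {k : ℕ} {t : ℝ}

theorem arrivalTime_nonneg : 0 ≤ arrivalTime N k :=
  Real.sInf_nonneg fun _ hu => hu.1

theorem bddBelow_setOf_le_apply : BddBelow {t | 0 ≤ t ∧ k ≤ N t} :=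
  ⟨0, fun _ hu => hu.1⟩

theorem arrivalTime_le (ht : 0 ≤ t) (hk : k ≤ N t) : arrivalTime N k ≤ t :=
  csInf_le bddBelow_setOf_le_apply ⟨ht, hk⟩

theorem apply_lt_of_lt_arrivalTime (ht : 0 ≤ t) (hlt : t < arrivalTime N k) : N t < k :=
  lt_of_not_ge fun hk => (arrivalTime_le ht hk).not_gt hlt

theorem le_arrivalTime {p : ℝ} (ht : 0 ≤ t) (hk : k ≤ N t)
    (hbefore : ∀ u, 0 ≤ u → u < p → N u < k) : p ≤ arrivalTime N k :=
  le_csInf ⟨t, ht, hk⟩ fun u ⟨hu, huk⟩ => le_of_not_gt fun hup => (hbefore u hu hup).not_ge huk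

theorem IsCountingPath.le_apply_arrivalTime (hN : IsCountingPath N) (ht : 0 ≤ t) (hk : k ≤ N t) :
    k ≤ N (arrivalTime N k) := by
  have hconst : ∀ᶠ u in 𝓝[>] arrivalTime N k, N u = N (arrivalTime N k) := by
    simpa only [nhds_discrete, tendsto_pure] using hN.right_cont _ arrivalTime_nonneg
  obtain ⟨w, hw, hwN⟩ := mem_nhdsGT_iff_exists_Ioo_subset.1 hconst
  obtain ⟨u, ⟨hu, huk⟩, huw⟩ := exists_lt_of_csInf_lt (s := {u | 0 ≤ u ∧ k ≤ N u}) ⟨t, ht, hk⟩ hw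
  rcases (csInf_le bddBelow_setOf_le_apply ⟨hu, huk⟩).eq_or_lt with heq | hlt
  · rwa [arrivalTime, heq]
  · rwa [← hwN ⟨hlt, huw⟩]

theorem IsCountingPath.exists_arrivalTime_add_eq {D : ℝ → ℕ} (hN : IsCountingPath N)
    (hD : MonotoneOn D (Ici 0)) (ht : 0 ≤ t) (hk : k ∈ Finset.Icc 1 (N t)) :
    ∃ k' ∈ Finset.Icc 1 ((N + D) t), arrivalTime (N + D) k' = arrivalTime N k := by
  rw [Finset.mem_Icc] at hk
  set T := arrivalTime N k
  have hT : 0 ≤ T := arrivalTime_nonneg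
  have hTt : T ≤ t := arrivalTime_le ht hk.2
  have hkT : k ≤ N T := hN.le_apply_arrivalTime ht hk.2
  refine ⟨(N + D) T, Finset.mem_Icc.2 ⟨hk.1.trans (hkT.trans (Nat.le_add_right _ _)),
    add_le_add (hN.mono hT (hT.trans hTt) hTt) (hD hT (hT.trans hTt) hTt)⟩, ?_⟩
  refine (arrivalTime_le hT le_rfl).antisymm (le_arrivalTime hT le_rfl fun u hu huT => ?_)
  exact add_lt_add_of_lt_of_le ((apply_lt_of_lt_arrivalTime hu huT).trans_le hkT)
    (hD hu hT huT.le)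

theorem arrivalTime_succ_mem_Icc (hN : MonotoneOn N (Ici 0)) {p q : ℝ} (hp : 0 ≤ p) (hpq : p ≤ q)
    (hlt : N p < N q) : arrivalTime N (N p + 1) ∈ Icc p q :=
  ⟨le_arrivalTime (hp.trans hpq) hlt fun _ hu hup => Nat.lt_succ_of_le (hN hu hp hup.le),
    arrivalTime_le (hp.trans hpq) hlt⟩

end arrivalTime

/-- For `g ≥ 0` the supremum over an empty index set is `0` (`Real.sSup_empty`), the convention
`max ∅ = 0` of `R^{b,η}`. -/
def observedSup (g : ℝ → ℝ) (N : ℝ → ℕ) (t : ℝ) : ℝ :=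
  ⨆ k ∈ Finset.Icc 1 (N t), g (arrivalTime N k)

section observedSup

variable {g : ℝ → ℝ} {N : ℝ → ℕ} {t B : ℝ}

theorem observedSup_nonneg (hg : 0 ≤ g) : 0 ≤ observedSup g N t :=
  Real.iSup_nonneg fun _ => Real.iSup_nonneg fun _ => hg _

theorem observedSup_le (hB : 0 ≤ B) (h : ∀ k ∈ Finset.Icc 1 (N t), g (arrivalTime N k) ≤ B) :
    observedSup g N t ≤ B :=
  Real.iSup_le (fun k => Real.iSup_le (h k) hB) hB

theorem le_observedSup (hg : 0 ≤ g) {k : ℕ} (hk : k ∈ Finset.Icc 1 (N t)) :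
    g (arrivalTime N k) ≤ observedSup g N t := by
  have hbdd : BddAbove (range fun j => ⨆ _ : j ∈ Finset.Icc 1 (N t), g (arrivalTime N j)) :=
    ⟨_, forall_mem_range.2 fun _ => Real.iSup_le (fun hj => Finset.single_le_sum
      (fun i _ => hg (arrivalTime N i)) hj) (Finset.sum_nonneg fun i _ => hg (arrivalTime N i))⟩
  exact (ciSup_pos hk).symm.le.trans (le_ciSup hbdd k)

theorem observedSup_le_of_forall_le (hB : 0 ≤ B) (ht : 0 ≤ t) (h : ∀ s ∈ Icc 0 t, g s ≤ B) :
    observedSup g N t ≤ B :=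
  observedSup_le hB fun _ hk => h _ ⟨arrivalTime_nonneg, arrivalTime_le ht (Finset.mem_Icc.1 hk).2⟩

theorem IsCountingPath.observedSup_le_add {D : ℝ → ℕ} (hg : 0 ≤ g) (hN : IsCountingPath N)
    (hD : MonotoneOn D (Ici 0)) (ht : 0 ≤ t) : observedSup g N t ≤ observedSup g (N + D) t :=
  observedSup_le (observedSup_nonneg hg) fun _ hk => by
    obtain ⟨k', hk', heq⟩ := hN.exists_arrivalTime_add_eq hD ht hk
    exact heq ▸ le_observedSup hg hk'

theorem lt_observedSup (hg : 0 ≤ g) (hN : MonotoneOn N (Ici 0)) {p q a : ℝ} (hp : 0 ≤ p)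
    (hpq : p ≤ q) (hqt : q ≤ t) (hlt : N p < N q) (ha : ∀ u ∈ Icc p q, a < g u) :
    a < observedSup g N t :=
  (ha _ (arrivalTime_succ_mem_Icc hN hp hpq hlt)).trans_le <| le_observedSup hg <|
    Finset.mem_Icc.2 ⟨Nat.le_add_left 1 _,
      hlt.trans_le (hN (hp.trans hpq) (hp.trans (hpq.trans hqt)) hqt)⟩

end observedSup

section ObservedBarrier

variable {f : ℝ → ℝ} {N : ℕ → ℝ → ℕ} {t : ℝ}

theorem monotone_observedSup {g : ℝ → ℝ} (hg : 0 ≤ g) (hN : ∀ n, IsCountingPath (N n))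
    (hsucc : ∀ n, ∃ D, MonotoneOn D (Ici 0) ∧ N (n + 1) = N n + D) (ht : 0 ≤ t) :
    Monotone fun n => observedSup g (N n) t :=
  monotone_nat_of_le_succ fun n => by
    obtain ⟨D, hD, hND⟩ := hsucc n
    exact hND ▸ (hN n).observedSup_le_add hg hD ht

theorem tendsto_observedSup_sInf (hf : IsCadlag f) (hN : ∀ n, MonotoneOn (N n) (Ici 0))
    (hdetect : ∀ p q : ℚ, 0 ≤ p → p < q → ∀ᶠ n in atTop, N n p < N n q) (ht : 0 < t)
    (hjump : Function.leftLim f t ≤ f t) (x b : ℝ) :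
    Tendsto (fun n => observedSup (fun s => max (b - (x + f s)) 0) (N n) t) atTop
      (𝓝 (max (b - (x + sInf (f '' Icc 0 t))) 0)) := by
  have hg : 0 ≤ fun s => max (b - (x + f s)) 0 := fun _ => le_max_right _ _
  refine tendsto_order.2 ⟨fun a ha => ?_, fun a ha => Eventually.of_forall fun n =>
    (observedSup_le_of_forall_le (le_max_right _ _) ht.le fun s hs => ?_).trans_lt ha⟩
  · rcases lt_or_ge a 0 with ha₀ | ha₀
    · exact Eventually.of_forall fun n => ha₀.trans_le (observedSup_nonneg hg)
    have hε : 0 < b - (x + sInf (f '' Icc 0 t)) - a := by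
      rw [lt_max_iff] at ha; rcases ha with ha | ha <;> linarith
    obtain ⟨p, q, hp, hpq, hqt, hfpq⟩ := hf.exists_rat_Icc_lt_sInf_add ht hjump hε
    filter_upwards [hdetect p q (by exact_mod_cast hp) hpq] with n hn
    refine lt_observedSup hg (hN n) hp (by exact_mod_cast hpq.le) hqt hn fun u hu => ?_
    exact lt_max_of_lt_left (by linarith [hfpq u hu])
  · have hinf := csInf_le (hf.bddBelow_image_Icc t) (mem_image_of_mem f hs)
    exact max_le_max_right 0 (by linarith)

end ObservedBarrier

section Superposition

variable {Ω' : Type*} {M : ℕ → ℝ → Ω' → ℕ} {ω : Ω'}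

theorem supN_succ (M : ℕ → ℝ → Ω' → ℕ) (n : ℕ) (t : ℝ) (ω : Ω') :
    supN M (n + 1) t ω = supN M n t ω + M (n + 1) t ω :=
  Finset.sum_Icc_succ_top (Nat.le_add_left 1 n) _

theorem isCountingPath_supN (hM : ∀ k, 1 ≤ k → IsCountingPath fun t => M k t ω) (n : ℕ) :
    IsCountingPath fun t => supN M n t ω where
  mono _ hs _ hu hsu := Finset.sum_le_sum fun k hk => (hM k (Finset.mem_Icc.1 hk).1).mono hs hu hsu
  right_cont s hs := tendsto_finsetSum _ fun k hk => (hM k (Finset.mem_Icc.1 hk).1).right_cont s hs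

theorem eventually_supN_lt (hM : ∀ k, 1 ≤ k → MonotoneOn (fun t => M k t ω) (Ici 0))
    (hdense : ∀ p q : ℚ, 0 ≤ p → p < q → ∃ k, 1 ≤ k ∧ M k p ω < M k q ω) (p q : ℚ) (hp : 0 ≤ p)
    (hpq : p < q) : ∀ᶠ n in atTop, supN M n p ω < supN M n q ω := by
  obtain ⟨k, hk, hlt⟩ := hdense p q hp hpq
  have hp' : (0 : ℝ) ≤ p := by exact_mod_cast hp
  have hpq' : (p : ℝ) ≤ q := by exact_mod_cast hpq.le
  exact eventually_atTop.2 ⟨k, fun _ hn => Finset.sum_lt_sum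
    (fun j hj => (hM j (Finset.mem_Icc.1 hj).1) hp' (hp'.trans hpq') hpq')
    ⟨k, Finset.mem_Icc.2 ⟨hk, hn⟩, hlt⟩⟩

end Superposition

theorem sum_Icc_sub_pred (η : ℕ → ℝ) (n : ℕ) :
    ∑ k ∈ Finset.Icc 1 n, (η k - η (k - 1)) = η n - η 0 := by
  induction n with
  | zero => simp
  | succ n ih => rw [Finset.sum_Icc_succ_top (Nat.le_add_left 1 n), ih, Nat.add_sub_cancel]; ring

section Detection

variable {P : Measure Ω} {M : ℕ → ℝ → Ω → ℕ} {r : ℕ → ℝ} {p q : ℝ}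

theorem IsPoissonProcess.ae_isCountingPath {N : ℝ → Ω → ℕ} {c : ℝ} (hN : IsPoissonProcess P N c) :
    ∀ᵐ ω ∂P, IsCountingPath fun t => N t ω := by
  filter_upwards [hN.mono, hN.right_cont] with ω hmono hrc
  exact ⟨fun s hs t _ hst => hmono s t hs hst, hrc⟩

theorem ae_forall_isCountingPath (hM : ∀ k, 1 ≤ k → IsPoissonProcess P (M k) (r k)) :
    ∀ᵐ ω ∂P, ∀ k, 1 ≤ k → IsCountingPath fun t => M k t ω := by
  refine ae_all_iff.2 fun k => ?_
  by_cases hk : 1 ≤ k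
  · exact (hM k hk).ae_isCountingPath.mono fun _ h _ => h
  · exact Eventually.of_forall fun _ h => absurd h hk

theorem IsPoissonProcess.measure_setOf_le_eq {N : ℝ → Ω → ℕ} {c : ℝ}
    (hN : IsPoissonProcess P N c) (hp : 0 ≤ p) (hpq : p ≤ q) :
    P {ω | N q ω ≤ N p ω} = ENNReal.ofReal (exp (-(c * (q - p)))) := by
  simpa [Nat.sub_eq_zero_iff_le] using hN.pois_incr p q hp hpq 0

theorem measure_forall_le_le_exp (hM : ∀ k, 1 ≤ k → IsPoissonProcess P (M k) (r k))
    (hindep : iIndepFun (fun k ω t => M k t ω) P) (hp : 0 ≤ p) (hpq : p ≤ q) (n : ℕ) :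
    P {ω | ∀ k, 1 ≤ k → M k q ω ≤ M k p ω} ≤
      ENNReal.ofReal (exp (-((∑ k ∈ Finset.Icc 1 n, r k) * (q - p)))) := by
  have hsub : {ω | ∀ k, 1 ≤ k → M k q ω ≤ M k p ω} ⊆
      ⋂ k ∈ Finset.Icc 1 n, (fun ω t => M k t ω) ⁻¹' {g : ℝ → ℕ | g q ≤ g p} :=
    fun ω hω => mem_iInter₂.2 fun k hk => hω k (Finset.mem_Icc.1 hk).1
  refine (measure_mono hsub).trans_eq ?_
  rw [hindep.measure_inter_preimage_eq_mul _ fun _ _ =>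
    measurableSet_le (measurable_pi_apply q) (measurable_pi_apply p)]
  refine (Finset.prod_congr rfl fun k hk =>
    (hM k (Finset.mem_Icc.1 hk).1).measure_setOf_le_eq hp hpq).trans ?_
  rw [← ENNReal.ofReal_prod_of_nonneg fun _ _ => (exp_pos _).le, ← exp_sum, Finset.sum_mul,
    ← Finset.sum_neg_distrib]

theorem measure_forall_le_eq_zero (hM : ∀ k, 1 ≤ k → IsPoissonProcess P (M k) (r k))
    (hindep : iIndepFun (fun k ω t => M k t ω) P)
    (hr : Tendsto (fun n => ∑ k ∈ Finset.Icc 1 n, r k) atTop atTop) (hp : 0 ≤ p) (hpq : p < q) :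
    P {ω | ∀ k, 1 ≤ k → M k q ω ≤ M k p ω} = 0 := by
  have hlim : Tendsto (fun n => ENNReal.ofReal (exp (-((∑ k ∈ Finset.Icc 1 n, r k) * (q - p)))))
      atTop (𝓝 0) := by
    rw [← ENNReal.ofReal_zero]
    exact ENNReal.tendsto_ofReal (tendsto_exp_atBot.comp
      (tendsto_neg_atTop_atBot.comp (hr.atTop_mul_const (sub_pos.2 hpq))))
  exact le_antisymm (ge_of_tendsto' hlim (measure_forall_le_le_exp hM hindep hp hpq.le)) bot_le

theorem ae_forall_rat_exists_lt (hM : ∀ k, 1 ≤ k → IsPoissonProcess P (M k) (r k))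
    (hindep : iIndepFun (fun k ω t => M k t ω) P)
    (hr : Tendsto (fun n => ∑ k ∈ Finset.Icc 1 n, r k) atTop atTop) :
    ∀ᵐ ω ∂P, ∀ p q : ℚ, 0 ≤ p → p < q → ∃ k, 1 ≤ k ∧ M k p ω < M k q ω := by
  refine ae_all_iff.2 fun p => ae_all_iff.2 fun q => ?_
  by_cases hpq : 0 ≤ p ∧ p < q
  · filter_upwards [measure_eq_zero_iff_ae_notMem.1 (measure_forall_le_eq_zero hM hindep hr
      (p := p) (q := q) (by exact_mod_cast hpq.1) (by exact_mod_cast hpq.2))] with ω hω _ _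
    simpa using hω
  · exact Eventually.of_forall fun _ hp hq => absurd ⟨hp, hq⟩ hpq

end Detection

theorem Setting.ae_isCadlag (S : Setting Ω) : ∀ᵐ ω ∂S.P, IsCadlag fun s => S.X s ω :=
  S.cadlag.mono fun _ hX => ⟨fun s hs => (hX s hs).1, fun s hs => (hX s hs.le).2 hs⟩

theorem supR_eq_observedSup (S : Setting Ω) (M : ℕ → ℝ → Ω → ℕ) (x b : ℝ) (n : ℕ) (t : ℝ)
    (ω : Ω) : supR S M x b n t ω =
      observedSup (fun s => max (b - (x + S.X s ω)) 0) (fun t => supN M n t ω) t := rfl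

theorem monotone_tendsto_supR {S : Setting Ω} {M : ℕ → ℝ → Ω → ℕ} {ω : Ω}
    (hM : ∀ k, 1 ≤ k → IsCountingPath fun t => M k t ω)
    (hdense : ∀ p q : ℚ, 0 ≤ p → p < q → ∃ k, 1 ≤ k ∧ M k p ω < M k q ω)
    (hX : IsCadlag fun s => S.X s ω) {t : ℝ} (ht : 0 < t)
    (hjump : Function.leftLim (fun s => S.X s ω) t ≤ S.X t ω) (x b : ℝ) :
    Monotone (fun n => supR S M x b n t ω) ∧
      Tendsto (fun n => supR S M x b n t ω) atTop (𝓝 (max (b - (x + S.runInf t ω)) 0)) := by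
  simp only [supR_eq_observedSup]
  have hN := isCountingPath_supN hM
  exact ⟨monotone_observedSup (fun _ => le_max_right _ _) hN
      (fun n => ⟨_, (hM (n + 1) n.succ_pos).mono, funext (supN_succ M n · ω)⟩) ht.le,
    tendsto_observedSup_sInf hX (fun n => (hN n).mono)
      (eventually_supN_lt (fun k hk => (hM k hk).mono) hdense) ht hjump x b⟩

theorem barrier_control_convergence_general {Ω : Type*} [MeasurableSpace Ω] (S : Setting Ω)
    (η : ℕ → ℝ) (hη0 : η 0 = 0) (hηlim : Tendsto η atTop atTop)
    (M : ℕ → ℝ → Ω → ℕ)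
    (hpp : ∀ k : ℕ, 1 ≤ k → IsPoissonProcess S.P (M k) (η k - η (k - 1)))
    (hindep : iIndepFun
        (fun k ω => fun t : ℝ => M k t ω) S.P)
    (x b : ℝ) :
    ∀ᵐ ω ∂S.P,
      (∀ t : ℝ, 0 < t → Function.leftLim (fun s => S.X s ω) t ≤ S.X t ω →
        Monotone (fun n => supR S M x b n t ω) ∧
        Tendsto (fun n => supR S M x b n t ω) atTop
          (𝓝 (max (b - (x + S.runInf t ω)) 0))) ∧
      ∀ᵐ t ∂(volume.restrict (Ioi (0:ℝ))),
        Tendsto (fun n => x + S.X t ω + supR S M x b n t ω) atTop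
          (𝓝 (x + S.X t ω + max (b - (x + S.runInf t ω)) 0)) := by
  have hrates : Tendsto (fun n => ∑ k ∈ Finset.Icc 1 n, (η k - η (k - 1))) atTop atTop := by
    simpa only [sum_Icc_sub_pred, hη0, sub_zero] using hηlim
  filter_upwards [ae_forall_isCountingPath hpp, ae_forall_rat_exists_lt hpp hindep hrates,
    S.ae_isCadlag] with ω hM hdense hX
  have hconv := fun t (ht : 0 < t) hjump => monotone_tendsto_supR hM hdense hX ht hjump x b
  refine ⟨hconv, ?_⟩
  filter_upwards [ae_restrict_mem measurableSet_Ioi,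
    ae_restrict_of_ae (hX.countable_downJumps.ae_notMem volume)] with t ht hjump
  exact tendsto_const_nhds.add (hconv t ht (not_lt.1 fun h => hjump ⟨ht, by rwa [add_zero]⟩)).2

/-- step (i) of the proof of Theorem 5.1: under the superposition coupling,
for every `x, b ∈ ℝ`, almost surely: at every time `t > 0` at which `X` does not jump downward,
`R^{b,η_n}_t` increases to `R^{b,∞}_t = (b - X̲_t)⁺`; consequently `U^{b,η_n}_t` increases to
`U^{b,∞}_t` for Lebesgue-a.e. `t > 0`. -/
theorem barrier_control_convergence {Ω : Type*} [MeasurableSpace Ω] (S : Setting Ω)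
    (η : ℕ → ℝ) (hη0 : η 0 = 0) (hηmono : StrictMono η) (hηlim : Tendsto η atTop atTop)
    (M : ℕ → ℝ → Ω → ℕ)
    (hpp : ∀ k : ℕ, 1 ≤ k → IsPoissonProcess S.P (M k) (η k - η (k - 1)))
    (hindep : iIndepFun
        (fun k ω => fun t : ℝ => M k t ω) S.P)
    (hindepX : IndepFun (fun ω => fun p : ℕ × ℝ => M p.1 p.2 ω)
        (fun ω => fun t : ℝ => S.X t ω) S.P)
    (x b : ℝ) :
    ∀ᵐ ω ∂S.P,
      (∀ t : ℝ, 0 < t → Function.leftLim (fun s => S.X s ω) t ≤ S.X t ω →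
        Monotone (fun n => supR S M x b n t ω) ∧
        Tendsto (fun n => supR S M x b n t ω) atTop
          (𝓝 (max (b - (x + S.runInf t ω)) 0))) ∧
      ∀ᵐ t ∂(volume.restrict (Ioi (0:ℝ))),
        Tendsto (fun n => x + S.X t ω + supR S M x b n t ω) atTop
          (𝓝 (x + S.X t ω + max (b - (x + S.runInf t ω)) 0)) :=
  barrier_control_convergence_general S η hη0 hηlim M hpp hindep x b

end PoissonControl
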